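/- Let n ≥ 1 and let ψ : Fin n × Fin n → ℂ be a maximally entangled unit vector. Then the multiset of eigenvalues (with multiplicity) of the partial transpose (ψψᴴ)^{T_A} consists of the value 1/n with multiplicity n(n+1)/2 and the value −1/n with multiplicity n(n−1)/2. -/

import Mathlib

/-!
Write `ψ = ∑ B i j |i⟩|j⟩`. Entrywise, the square of `M = (ψψᴴ)^{T_A}` is the Kronecker product of
the transposes of `B Bᴴ` and `Bᴴ B`; maximal entanglement makes both equal to `n⁻¹ • 1`, so
`M² = n⁻² • 1` and every eigenvalue of `M` is `±1/n`. The eigenvalues sum to `tr M = tr ψψᴴ = 1`,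
so there are `n` more positive ones than negative ones among the `n²`, which fixes both counts.
-/

open Matrix Polynomial
open scoped ComplexOrder

noncomputable section

/-- Partial transpose on subsystem A of a bipartite matrix. -/
def ptA {m n : ℕ} (ρ : Matrix (Fin m × Fin n) (Fin m × Fin n) ℂ) :
    Matrix (Fin m × Fin n) (Fin m × Fin n) ℂ :=
  fun p q => ρ (q.1, p.2) (p.1, q.2)

/-- A density matrix: positive semidefinite with trace one. -/
def IsDensityMatrix {k : Type*} [Fintype k] [DecidableEq k] (ρ : Matrix k k ℂ) : Prop :=
  ρ.PosSemidef ∧ ρ.trace = 1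

open Classical in
/-- Minimal (real) eigenvalue of a Hermitian matrix (junk value 0 otherwise). -/
noncomputable def minEig {k : Type*} [Fintype k] [DecidableEq k] (A : Matrix k k ℂ) : ℝ :=
  if h : A.IsHermitian then ⨅ i, h.eigenvalues i else 0

/-- The rank-one projection |ψ⟩⟨ψ| of a vector ψ. -/
def proj {k : Type*} [Fintype k] (ψ : k → ℂ) : Matrix k k ℂ :=
  Matrix.vecMulVec ψ (star ψ)

/-- A unit vector. -/
def IsUnitVec {k : Type*} [Fintype k] (ψ : k → ℂ) : Prop :=
  ∑ p, ‖ψ p‖ ^ 2 = 1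

/-- Reduced matrix on subsystem A of a pure state ψ. -/
def reducedA {n : ℕ} (ψ : Fin n × Fin n → ℂ) : Matrix (Fin n) (Fin n) ℂ :=
  fun i k => ∑ j, ψ (i, j) * (starRingEnd ℂ) (ψ (k, j))

/-- ψ is maximally entangled iff its reduced matrix is (1/n)·identity. -/
def MaxEntangled {n : ℕ} (ψ : Fin n × Fin n → ℂ) : Prop :=
  reducedA ψ = ((n : ℂ))⁻¹ • (1 : Matrix (Fin n) (Fin n) ℂ)

open scoped Kronecker

theorem Matrix.mul_eq_smul_one_comm {ι K : Type*} [Fintype ι] [DecidableEq ι] [Field K]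
    {A B : Matrix ι ι K} {c : K} (hc : c ≠ 0) (h : A * B = c • 1) : B * A = c • 1 := by
  have h' : (c⁻¹ • B) * A = 1 :=
    mul_eq_one_comm.mp (by rw [Matrix.mul_smul, h, smul_smul, inv_mul_cancel₀ hc, one_smul])
  rwa [Matrix.smul_mul, inv_smul_eq_iff₀ hc] at h'

theorem Multiset.eq_replicate_count_add_replicate_count {α : Type*} [DecidableEq α] {a b : α}
    (hab : a ≠ b) {s : Multiset α} (hs : ∀ x ∈ s, x = a ∨ x = b) :
    s = replicate (s.count a) a + replicate (s.count b) b := by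
  rw [← filter_eq', ← filter_eq']
  conv_lhs => rw [← filter_add_not (· = a) s]
  congr 1
  refine filter_congr fun x hx => ?_
  rcases hs x hx with rfl | rfl <;> simp [hab, Ne.symm hab]

theorem Matrix.IsHermitian.eigenvalues_sq_eq {𝕜 ι : Type*} [RCLike 𝕜] [Fintype ι]
    [DecidableEq ι] {A : Matrix ι ι 𝕜} (hA : A.IsHermitian) {r : ℝ}
    (h : A * A = (r : 𝕜) • 1) (i : ι) : hA.eigenvalues i ^ 2 = r := by
  set v : ι → 𝕜 := ⇑(hA.eigenvectorBasis i)
  have hv : v ≠ 0 := (WithLp.ofLp_eq_zero 2).ne.2 (hA.eigenvectorBasis.orthonormal.ne_zero i)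
  have hAv : A *ᵥ v = (hA.eigenvalues i : 𝕜) • v := by
    rw [hA.mulVec_eigenvectorBasis, RCLike.real_smul_eq_coe_smul (K := 𝕜)]
  have key : ((hA.eigenvalues i : 𝕜) ^ 2 - r) • v = 0 := by
    have := congrArg (· *ᵥ v) h
    simp only [← mulVec_mulVec, hAv, mulVec_smul, smul_mulVec, one_mulVec, smul_smul] at this
    rw [sub_smul, sq, this, sub_self]
  have := sub_eq_zero.mp ((smul_eq_zero.mp key).resolve_right hv)
  exact_mod_cast this

def coeffMatrix {m n : ℕ} (ψ : Fin m × Fin n → ℂ) : Matrix (Fin m) (Fin n) ℂ :=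
  Matrix.of (Function.curry ψ)

theorem reducedA_eq_coeffMatrix_mul_conjTranspose {n : ℕ} (ψ : Fin n × Fin n → ℂ) :
    reducedA ψ = coeffMatrix ψ * (coeffMatrix ψ)ᴴ := by
  ext i k
  simp [reducedA, coeffMatrix, mul_apply]

theorem ptA_proj_mul_self {m n : ℕ} (ψ : Fin m × Fin n → ℂ) :
    ptA (proj ψ) * ptA (proj ψ) =
      (coeffMatrix ψ * (coeffMatrix ψ)ᴴ)ᵀ ⊗ₖ ((coeffMatrix ψ)ᴴ * coeffMatrix ψ)ᵀ := by
  ext ⟨i, j⟩ ⟨k, l⟩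
  simp only [mul_apply, Fintype.sum_prod_type, kroneckerMap_apply, transpose_apply,
    conjTranspose_apply, coeffMatrix, of_apply, Function.curry_apply, ptA, proj,
    vecMulVec_apply, Pi.star_apply, Finset.sum_mul_sum]
  rw [Finset.sum_comm]
  refine Finset.sum_congr rfl fun q _ => Finset.sum_congr rfl fun p _ => ?_
  ring

theorem trace_ptA {m n : ℕ} (ρ : Matrix (Fin m × Fin n) (Fin m × Fin n) ℂ) :
    (ptA ρ).trace = ρ.trace :=
  rfl

theorem IsUnitVec.trace_proj {k : Type*} [Fintype k] {ψ : k → ℂ} (hψ : IsUnitVec ψ) :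
    (proj ψ).trace = 1 := by
  rw [proj, trace_vecMulVec, dotProduct]
  simp only [Pi.star_apply, RCLike.star_def, Complex.mul_conj, Complex.normSq_eq_norm_sq]
  exact_mod_cast hψ

theorem Multiset.eq_replicate_inv_add_replicate_neg_inv {n : ℕ} (hn : n ≠ 0)
    {s : Multiset ℝ} (hs : ∀ x ∈ s, x = (n : ℝ)⁻¹ ∨ x = -(n : ℝ)⁻¹)
    (hcard : card s = n * n) (hsum : s.sum = 1) :
    s = replicate (n * (n + 1) / 2) (n : ℝ)⁻¹ + replicate (n * (n - 1) / 2) (-(n : ℝ)⁻¹) := by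
  have hn' : (n : ℝ) ≠ 0 := Nat.cast_ne_zero.mpr hn
  have hne : (n : ℝ)⁻¹ ≠ -(n : ℝ)⁻¹ := fun h => inv_ne_zero hn' (by linarith)
  rw [eq_replicate_count_add_replicate_count hne hs] at hcard hsum ⊢
  set p := s.count (n : ℝ)⁻¹
  set q := s.count (-(n : ℝ)⁻¹)
  simp only [card_add, card_replicate, sum_add, sum_replicate, nsmul_eq_mul] at hcard hsum
  have hpq : (p : ℝ) = q + n := by
    field_simp at hsum
    linarith
  have hpq' : p = q + n := by exact_mod_cast hpq
  have hn_le : n ≤ n * n := Nat.le_mul_self n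
  rw [show n * (n + 1) = n * n + n by ring, Nat.mul_sub_one]
  congr 2 <;> omega

theorem stmt7 (n : ℕ) (hn : 1 ≤ n) (ψ : Fin n × Fin n → ℂ)
    (hψ : IsUnitVec ψ) (hME : MaxEntangled ψ)
    (h : (ptA (proj ψ)).IsHermitian) :
    Finset.univ.val.map h.eigenvalues =
      Multiset.replicate (n * (n + 1) / 2) ((n : ℝ))⁻¹ +
        Multiset.replicate (n * (n - 1) / 2) (-((n : ℝ))⁻¹) := by
  have hn0 : (n : ℂ)⁻¹ ≠ 0 := inv_ne_zero (Nat.cast_ne_zero.mpr (by omega))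
  have hBBH : coeffMatrix ψ * (coeffMatrix ψ)ᴴ = (n : ℂ)⁻¹ • 1 :=
    reducedA_eq_coeffMatrix_mul_conjTranspose ψ ▸ hME
  have hBHB := mul_eq_smul_one_comm hn0 hBBH
  have hsq : ptA (proj ψ) * ptA (proj ψ) = (((n : ℝ)⁻¹ ^ 2 : ℝ) : ℂ) • 1 := by
    rw [ptA_proj_mul_self, hBBH, hBHB]
    simp [smul_kronecker, kronecker_smul, smul_smul, sq]
  have hsum : ∑ i, h.eigenvalues i = 1 := by
    have := h.trace_eq_sum_eigenvalues
    rw [trace_ptA, hψ.trace_proj] at this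
    apply Complex.ofReal_injective
    simpa using this.symm
  refine Multiset.eq_replicate_inv_add_replicate_neg_inv (by omega) ?_ (by simp) hsum
  simp only [Multiset.mem_map, Finset.mem_val, Finset.mem_univ, true_and,
    forall_exists_index, forall_apply_eq_imp_iff]
  exact fun i => sq_eq_sq_iff_eq_or_eq_neg.mp (h.eigenvalues_sq_eq hsq i)
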